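/- For m ≥ 2 nonnegative reals a₁,...,a_m, there exist angles θ₁,...,θ_m such that |Σᵢ aᵢ·exp(iθᵢ)| = ρ, for every ρ in the interval [r_min, Σᵢ aᵢ], where r_min = min over sign vectors ε ∈ {-1,1}^m of |Σᵢ εᵢaᵢ|. -/

import Mathlib

/-! Rotating the vectors `aᵢ e^{iθᵢ}` continuously, the length of their sum takes every value
between any two of its values, since the torus of angles is connected. Choosing all `θᵢ = 0`
gives `Σ aᵢ`, and choosing `θᵢ ∈ {0, π}` according to a sign vector `ε` gives `|Σ εᵢ aᵢ|`. -/

open Complex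

noncomputable section

variable {ι : Type*} [Fintype ι]

def resultantNorm (a θ : ι → ℝ) : ℝ :=
  ‖∑ i, (a i : ℂ) * exp (θ i * I)‖

theorem isPreconnected_range_resultantNorm (a : ι → ℝ) :
    IsPreconnected (Set.range (resultantNorm a)) :=
  isPreconnected_range (by unfold resultantNorm; fun_prop)

theorem norm_sum_mem_range_resultantNorm {a : ι → ℝ} (z : ι → ℂ) (hz : ∀ i, ‖z i‖ = a i) :
    ‖∑ i, z i‖ ∈ Set.range (resultantNorm a) :=
  ⟨fun i => arg (z i), by simp only [resultantNorm, ← hz, norm_mul_exp_arg_mul_I]⟩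

end

theorem stmt4_general (m : ℕ) (a : Fin m → ℝ) (ha : ∀ i, 0 ≤ a i) (rmin : ℝ)
    (hrmin : IsLeast {r : ℝ | ∃ ε : Fin m → ℝ,
        (∀ i, ε i = 1 ∨ ε i = -1) ∧ r = |∑ i, ε i * a i|} rmin) :
    ∀ ρ : ℝ, rmin ≤ ρ → ρ ≤ ∑ i, a i →
      ∃ θ : Fin m → ℝ,
        ‖∑ i, (a i : ℂ) * Complex.exp (θ i * Complex.I)‖ = ρ := by
  intro ρ hρmin hρmax
  obtain ⟨⟨ε, hε, rfl⟩, -⟩ := hrmin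
  have hsigned : |∑ i, ε i * a i| ∈ Set.range (resultantNorm a) := by
    have := norm_sum_mem_range_resultantNorm (a := a) (fun i => ((ε i * a i : ℝ) : ℂ)) fun i => by
      rcases hε i with h | h <;> simp [h, abs_of_nonneg (ha i)]
    rwa [← ofReal_sum, norm_real, Real.norm_eq_abs] at this
  have hsum : ∑ i, a i ∈ Set.range (resultantNorm a) := by
    have := norm_sum_mem_range_resultantNorm (a := a) (fun i => (a i : ℂ)) fun i => by
      simp [abs_of_nonneg (ha i)]
    rwa [← ofReal_sum, norm_real, Real.norm_of_nonneg (Finset.sum_nonneg fun i _ => ha i)]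
      at this
  exact (isPreconnected_range_resultantNorm a).Icc_subset hsigned hsum ⟨hρmin, hρmax⟩

theorem stmt4 (m : ℕ) (hm : 2 ≤ m) (a : Fin m → ℝ) (ha : ∀ i, 0 ≤ a i) (rmin : ℝ)
    (hrmin : IsLeast {r : ℝ | ∃ ε : Fin m → ℝ,
        (∀ i, ε i = 1 ∨ ε i = -1) ∧ r = |∑ i, ε i * a i|} rmin) :
    ∀ ρ : ℝ, rmin ≤ ρ → ρ ≤ ∑ i, a i →
      ∃ θ : Fin m → ℝ,
        ‖∑ i, (a i : ℂ) * Complex.exp (θ i * Complex.I)‖ = ρ :=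
  stmt4_general m a ha rmin hrmin
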